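/- arXiv:1410.6907 — 3 statements merged into one kernel-verified Lean document; each statement's English description precedes it below -/
import Mathlib

section
/- Let m ≥ 1 be an integer and Z > 0. Let F : [0,Z] × ℝ^m × ℝ² → ℂ be jointly measurable, with F(z,·,·) ∈ L¹(ℝ^m × ℝ²; ℂ) for each z ∈ [0,Z] and with z ↦ F(z,·,·) continuous from [0,Z] into L¹(ℝ^m × ℝ²; ℂ). Then sup_{z ∈ [0,Z]} ∫_{ℝ^m × ℝ²} | ∫₀^z F(z', u, v) exp( i (z'/ε) |v|² ) dz' | du dv → 0 as ε → 0⁺, where |v| denotes the Euclidean norm of v ∈ ℝ². -/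
/-!
By the Riemann–Lebesgue lemma, `∫₀^z g(t) e^{iwt} dt → 0` as `|w| → ∞` for every `g ∈ L¹(ℝ)`.
These primitives are equicontinuous in `z`, with the primitive of `|g|` as a common modulus, so the
convergence is uniform for `z` in a compact set. Applied to `g = F(·, x)` and `w = |v|² / ε`, which
tends to infinity for almost every `x = (u, v)`, this makes the supremum over `z` of the inner
integral tend to `0` pointwise almost everywhere. It is dominated by `∫₀^Z |F(t, x)| dt`, which is
integrable in `x` because `z ↦ ‖F z‖_{L¹}` is continuous, hence bounded on `[0, Z]`. Dominated
convergence concludes; the supremum need not be measurable, but it may be replaced by a measurable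
minorant with the same integral, which still tends to `0`.
-/

open MeasureTheory Filter Set Topology Complex
open scoped Real ENNReal NNReal InnerProductSpace

noncomputable section

abbrev E2 : Type := EuclideanSpace ℝ (Fin 2)

theorem Equicontinuous.tendstoUniformlyOn_of_tendsto {ι X α : Type*} [TopologicalSpace X]
    [UniformSpace α] {F : ι → X → α} {f : X → α} {l : Filter ι} {K : Set X}
    (hF : Equicontinuous F) (hK : IsCompact K) (h : ∀ x ∈ K, Tendsto (F · x) l (𝓝 (f x))) :
    TendstoUniformlyOn F f l K := by
  have : CompactSpace K := isCompact_iff_compactSpace.mp hK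
  rw [tendstoUniformlyOn_iff_restrict]
  refine UniformFun.tendsto_iff_tendstoUniformly.mp
    ((((equicontinuous_restrict_iff F).mpr (hF.equicontinuousOn K)).tendsto_uniformFun_iff_pi l
      (K.domRestrict f)).mpr ?_)
  exact tendsto_pi_nhds.mpr fun x => h x x.2

theorem TendstoUniformlyOn.tendsto_iSup_enorm {ι α E : Type*} [SeminormedAddGroup E]
    {F : ι → α → E} {l : Filter ι} {K : Set α} (h : TendstoUniformlyOn F 0 l K) :
    Tendsto (fun i => ⨆ x ∈ K, ‖F i x‖ₑ) l (𝓝 0) := by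
  rw [EMetric.tendstoUniformlyOn_iff] at h
  refine ENNReal.tendsto_nhds_zero.2 fun ε hε => (h ε hε).mono fun i hi => ?_
  exact iSup₂_le fun x hx => by
    simpa only [Pi.zero_apply, edist_zero_left, enorm_eq_nnnorm] using (hi x hx).le

theorem tendsto_lintegral_zero_of_le_of_ae_tendsto {α ι : Type*} [MeasurableSpace α]
    {μ : Measure α} {l : Filter ι} [l.IsCountablyGenerated] {f : ι → α → ℝ≥0∞}
    (bound : α → ℝ≥0∞) (h_bound : ∀ i, f i ≤ bound) (h_fin : ∫⁻ a, bound a ∂μ ≠ ∞)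
    (h_lim : ∀ᵐ a ∂μ, Tendsto (f · a) l (𝓝 0)) :
    Tendsto (fun i => ∫⁻ a, f i a ∂μ) l (𝓝 0) := by
  choose g hg_meas hg_le hg_eq using fun i => exists_measurable_le_lintegral_eq μ (f i)
  simp only [hg_eq]
  have hg_lim : ∀ᵐ a ∂μ, Tendsto (g · a) l (𝓝 0) := h_lim.mono fun a ha =>
    tendsto_of_tendsto_of_tendsto_of_le_of_le tendsto_const_nhds ha
      (fun _ => zero_le) fun i => hg_le i a
  simpa only [lintegral_zero] using
    tendsto_lintegral_filter_of_dominated_convergence bound (Eventually.of_forall hg_meas)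
      (Eventually.of_forall fun i => Eventually.of_forall fun a => (hg_le i a).trans (h_bound i a))
      h_fin hg_lim

theorem abs_integral_norm_sub_integral_norm_le {α E : Type*} [MeasurableSpace α] {μ : Measure α}
    [NormedAddCommGroup E] {f g : α → E} (hf : Integrable f μ) (hg : Integrable g μ) :
    |∫ a, ‖f a‖ ∂μ - ∫ a, ‖g a‖ ∂μ| ≤ ∫ a, ‖f a - g a‖ ∂μ := by
  rw [← integral_sub hf.norm hg.norm]
  exact (abs_integral_le_integral_abs).trans <| integral_mono (hf.norm.sub hg.norm).abs
    (hf.sub hg).norm fun a => abs_norm_sub_norm_le _ _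

theorem continuousOn_integral_norm_of_tendsto {α E : Type*} [MeasurableSpace α]
    {μ : Measure α} [NormedAddCommGroup E] {F : ℝ → α → E} {s : Set ℝ}
    (hF : ∀ t ∈ s, Integrable (F t) μ)
    (hcont : ∀ t₀ ∈ s, Tendsto (fun t => ∫ a, ‖F t a - F t₀ a‖ ∂μ) (𝓝[s] t₀) (𝓝 0)) :
    ContinuousOn (fun t => ∫ a, ‖F t a‖ ∂μ) s := by
  intro t₀ ht₀
  rw [ContinuousWithinAt, tendsto_iff_dist_tendsto_zero]
  refine squeeze_zero' (Eventually.of_forall fun _ => dist_nonneg) ?_ (hcont t₀ ht₀)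
  filter_upwards [self_mem_nhdsWithin] with t ht
  exact abs_integral_norm_sub_integral_norm_le (hF t ht) (hF t₀ ht₀)

theorem tendsto_integral_mul_exp_I_mul_cocompact (g : ℝ → ℂ) :
    Tendsto (fun w : ℝ => ∫ t, g t * exp (I * ((w * t : ℝ) : ℂ))) (cocompact ℝ) (𝓝 0) := by
  -- `𝐞 (-(t * w')) = exp (2πi · (-t w'))`, so the frequency `w` corresponds to `w' = -w / (2π)`.
  have hscale : Tendsto (fun w : ℝ => w * -(2 * π)⁻¹) (cocompact ℝ) (cocompact ℝ) :=
    tendsto_cocompact_mul_right₀ (by simp [Real.pi_ne_zero])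
  refine ((Real.tendsto_integral_exp_smul_cocompact g).comp hscale).congr fun w => ?_
  refine integral_congr_ae (Eventually.of_forall fun t => ?_)
  have hπ : (π : ℂ) ≠ 0 := by exact_mod_cast Real.pi_ne_zero
  simp only [Circle.smul_def, Real.fourierChar_apply, smul_eq_mul, mul_comm (g t)]
  congr 2
  push_cast
  field_simp

theorem tendsto_intervalIntegral_mul_exp_I_mul_cocompact (g : ℝ → ℂ) (a b : ℝ) :
    Tendsto (fun w : ℝ => ∫ t in a..b, g t * exp (I * ((w * t : ℝ) : ℂ))) (cocompact ℝ)
      (𝓝 0) := by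
  have hset : ∀ s : Set ℝ, MeasurableSet s →
      Tendsto (fun w : ℝ => ∫ t in s, g t * exp (I * ((w * t : ℝ) : ℂ))) (cocompact ℝ) (𝓝 0) :=
    fun s hs => (tendsto_integral_mul_exp_I_mul_cocompact (s.indicator g)).congr fun w => by
      simp_rw [← integral_indicator hs, indicator_mul_left]
  simpa only [sub_zero, intervalIntegral] using
    (hset (Ioc a b) measurableSet_Ioc).sub (hset (Ioc b a) measurableSet_Ioc)

theorem equicontinuous_intervalIntegral_mul_exp_I_mul {g : ℝ → ℂ} (hg : Integrable g) (a : ℝ) :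
    Equicontinuous fun (w : ℝ) (z : ℝ) => ∫ t in a..z, g t * exp (I * ((w * t : ℝ) : ℂ)) := by
  intro z₀
  have hgi : ∀ c d : ℝ, IntervalIntegrable g volume c d := fun _ _ => hg.intervalIntegrable
  refine Metric.equicontinuousAt_of_continuity_modulus (fun z => |∫ t in z₀..z, ‖g t‖|) ?_ _
    (Eventually.of_forall fun z w => ?_)
  · simpa using ((intervalIntegral.continuous_primitive
      (fun c d => (hgi c d).norm) z₀).abs.tendsto z₀)
  · have hgw : ∀ c d : ℝ,
        IntervalIntegrable (fun t => g t * exp (I * ((w * t : ℝ) : ℂ))) volume c d :=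
      fun c d => (hgi c d).mul_continuousOn (by fun_prop)
    rw [dist_comm, dist_eq_norm, intervalIntegral.integral_interval_sub_left (hgw a z) (hgw a z₀)]
    refine (intervalIntegral.norm_integral_le_abs_integral_norm).trans (le_of_eq ?_)
    simp only [norm_mul, norm_exp_I_mul_ofReal, mul_one]

theorem tendsto_iSup_enorm_intervalIntegral_mul_exp_I_mul_cocompact {g : ℝ → ℂ}
    (hg : Integrable g) (a : ℝ) {K : Set ℝ} (hK : IsCompact K) :
    Tendsto (fun w : ℝ => ⨆ z ∈ K, ‖∫ t in a..z, g t * exp (I * ((w * t : ℝ) : ℂ))‖ₑ)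
      (cocompact ℝ) (𝓝 0) :=
  ((equicontinuous_intervalIntegral_mul_exp_I_mul hg a).tendstoUniformlyOn_of_tendsto hK
    fun z _ => tendsto_intervalIntegral_mul_exp_I_mul_cocompact g a z).tendsto_iSup_enorm

theorem tendsto_iSup_lintegral_enorm_intervalIntegral_mul_exp_I_mul {X ι : Type*}
    [MeasurableSpace X] {μ : Measure X} [SFinite μ] {l : Filter ι} [l.IsCountablyGenerated]
    {F : ℝ → X → ℂ} {Λ : ι → X → ℝ} {a b : ℝ}
    (hF : Integrable (Function.uncurry F) ((volume.restrict (Icc a b)).prod μ))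
    (hΛ : ∀ᵐ x ∂μ, Tendsto (Λ · x) l (cocompact ℝ)) :
    Tendsto (fun i => ⨆ z ∈ Icc a b,
      ∫⁻ x, ‖∫ t in a..z, F t x * exp (I * ((Λ i x * t : ℝ) : ℂ))‖ₑ ∂μ) l (𝓝 0) := by
  set Ψ : ι → X → ℝ≥0∞ := fun i x =>
    ⨆ z ∈ Icc a b, ‖∫ t in a..z, F t x * exp (I * ((Λ i x * t : ℝ) : ℂ))‖ₑ
  set bound : X → ℝ≥0∞ := fun x => ∫⁻ t in Icc a b, ‖F t x‖ₑ
  have h_fin : ∫⁻ x, bound x ∂μ ≠ ∞ :=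
    (lintegral_prod_symm _ hF.1.enorm).symm.trans_ne hF.2.ne
  have h_le : ∀ i, Ψ i ≤ bound := fun i x => iSup₂_le fun z hz => by
    rw [intervalIntegral.integral_of_le hz.1]
    refine (enorm_integral_le_lintegral_enorm _).trans ?_
    simp only [enorm_mul, enorm_exp_I_mul_ofReal, mul_one]
    exact lintegral_mono_set (Ioc_subset_Icc_self.trans (Icc_subset_Icc_right hz.2))
  have h_lim : ∀ᵐ x ∂μ, Tendsto (Ψ · x) l (𝓝 0) := by
    filter_upwards [hF.prod_left_ae, hΛ] with x hx hΛx
    have hg : Integrable ((Icc a b).indicator (F · x)) :=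
      (integrable_indicator_iff measurableSet_Icc).2 hx
    refine ((tendsto_iSup_enorm_intervalIntegral_mul_exp_I_mul_cocompact hg a
      isCompact_Icc).comp hΛx).congr fun i => iSup_congr fun z => iSup_congr fun hz => ?_
    refine congrArg _ (intervalIntegral.integral_congr fun t ht => ?_)
    rw [uIcc_of_le hz.1] at ht
    simp only [indicator_of_mem (Icc_subset_Icc_right hz.2 ht)]
  exact tendsto_of_tendsto_of_tendsto_of_le_of_le tendsto_const_nhds
    (tendsto_lintegral_zero_of_le_of_ae_tendsto bound h_le h_fin h_lim) (fun _ => zero_le)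
    fun i => iSup₂_lintegral_le _

theorem statement7_general
    (m : ℕ) (Z : ℝ)
    (F : ℝ → (Fin m → ℝ) × E2 → ℂ)
    (hFmeas : Measurable (Function.uncurry F))
    (hFint : ∀ z ∈ Icc (0:ℝ) Z, Integrable (F z) (volume : Measure ((Fin m → ℝ) × E2)))
    (hFcont : ∀ z₀ ∈ Icc (0:ℝ) Z,
      Tendsto (fun z : ℝ => ∫ x : (Fin m → ℝ) × E2, ‖F z x - F z₀ x‖)
        (𝓝[Icc (0:ℝ) Z] z₀) (𝓝 0)) :
    Tendsto
      (fun ε : ℝ => ⨆ z ∈ Icc (0:ℝ) Z,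
        ∫⁻ x : (Fin m → ℝ) × E2,
          (‖∫ z' in (0:ℝ)..z,
              F z' x * Complex.exp (Complex.I * (((z' / ε) * ‖x.2‖ ^ 2 : ℝ) : ℂ))‖₊ : ℝ≥0∞))
      (𝓝[>] (0:ℝ)) (𝓝 0) := by
  have hF : Integrable (Function.uncurry F) ((volume.restrict (Icc 0 Z)).prod volume) :=
    (integrable_prod_iff hFmeas.aestronglyMeasurable).2
      ⟨ae_restrict_of_forall_mem measurableSet_Icc hFint,
        (continuousOn_integral_norm_of_tendsto hFint hFcont).integrableOn_Icc⟩
  have hv : ∀ᵐ x : (Fin m → ℝ) × E2, x.2 ≠ 0 :=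
    Measure.quasiMeasurePreserving_snd.ae (by simp [ae_iff] : ∀ᵐ v : E2, v ≠ 0)
  have hΛ : ∀ᵐ x : (Fin m → ℝ) × E2,
      Tendsto (fun ε : ℝ => ‖x.2‖ ^ 2 / ε) (𝓝[>] 0) (cocompact ℝ) := hv.mono fun x hx =>
    ((tendsto_inv_nhdsGT_zero.const_mul_atTop (by positivity)).mono_right atTop_le_cocompact)
  have hphase : ∀ ε z' : ℝ, ∀ x : (Fin m → ℝ) × E2, z' / ε * ‖x.2‖ ^ 2 = ‖x.2‖ ^ 2 / ε * z' :=
    fun _ _ _ => by ring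
  simpa only [hphase, ← enorm_eq_nnnorm] using
    tendsto_iSup_lintegral_enorm_intervalIntegral_mul_exp_I_mul hF hΛ

/-- **oscillatory-phase lemma, quadratic phase.** If `F : [0,Z] → L¹(ℝ^m×ℝ²;ℂ)`
is jointly measurable and continuous in the `L¹` sense, then
`sup_{z∈[0,Z]} ∫ |∫₀^z F(z',u,v) e^{i(z'/ε) |v|²} dz'| du dv → 0` as `ε → 0⁺`. -/
theorem statement7
    (m : ℕ) (hm : 1 ≤ m) (Z : ℝ) (hZ : 0 < Z)
    (F : ℝ → (Fin m → ℝ) × E2 → ℂ)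
    (hFmeas : Measurable (Function.uncurry F))
    (hFint : ∀ z ∈ Icc (0:ℝ) Z, Integrable (F z) (volume : Measure ((Fin m → ℝ) × E2)))
    (hFcont : ∀ z₀ ∈ Icc (0:ℝ) Z,
      Tendsto (fun z : ℝ => ∫ x : (Fin m → ℝ) × E2, ‖F z x - F z₀ x‖)
        (𝓝[Icc (0:ℝ) Z] z₀) (𝓝 0)) :
    Tendsto
      (fun ε : ℝ => ⨆ z ∈ Icc (0:ℝ) Z,
        ∫⁻ x : (Fin m → ℝ) × E2,
          (‖∫ z' in (0:ℝ)..z,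
              F z' x * Complex.exp (Complex.I * (((z' / ε) * ‖x.2‖ ^ 2 : ℝ) : ℂ))‖₊ : ℝ≥0∞))
      (𝓝[>] (0:ℝ)) (𝓝 0) :=
  statement7_general m Z F hFmeas hFint hFcont
end
end

section
/- Fix real constants k₀ > 0, r₀ > 0 and C₀ ≥ 0. For z ∈ ℝ let r_z² := r₀² (1 + i z/(k₀ r₀²)) ∈ ℂ (which is nonzero for every z), and define μ₁(z, x) := (r₀²/r_z²) · exp(−k₀² C₀ z / 8) · exp(−|x|²/(2 r_z²)) for x ∈ ℝ². Then μ₁ is smooth on ℝ × ℝ², μ₁(0, x) = exp(−|x|²/(2r₀²)) for all x, and μ₁ satisfies the damped paraxial Schrödinger equation ∂_z μ₁(z, x) = (i/(2k₀)) Δ_x μ₁(z, x) − (k₀² C₀/8) μ₁(z, x) for all (z, x) ∈ ℝ × ℝ², where Δ_x is the Laplacian in the variable x ∈ ℝ². -/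
open MeasureTheory Filter Set Topology Complex
open scoped Real ENNReal NNReal InnerProductSpace

noncomputable section

/-- The Laplacian of `g : ℝ² → ℂ` at `x`, as the sum of second partial derivatives along the
standard basis directions. -/
def lap (g : E2 → ℂ) (x : E2) : ℂ :=
  ∑ i : Fin 2,
    fderiv ℝ (fun y => fderiv ℝ g y (EuclideanSpace.single i (1:ℝ))) x
      (EuclideanSpace.single i (1:ℝ))

/-- `r_z² = r₀²(1 + i z/(k₀ r₀²))`. -/
def rz2 (k₀ r₀ z : ℝ) : ℂ :=
  (r₀ ^ 2 : ℂ) * (1 + Complex.I * (z : ℂ) / ((k₀ : ℂ) * (r₀ ^ 2 : ℂ)))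

/-- `μ₁(z,x) = (r₀²/r_z²) exp(−k₀²C₀z/8) exp(−|x|²/(2r_z²))`. -/
def mu1 (k₀ r₀ C₀ : ℝ) (z : ℝ) (x : E2) : ℂ :=
  ((r₀ ^ 2 : ℂ) / rz2 k₀ r₀ z) * ((Real.exp (-(k₀ ^ 2 * C₀ * z) / 8) : ℝ) : ℂ)
    * Complex.exp (-(‖x‖ ^ 2 : ℂ) / (2 * rz2 k₀ r₀ z))

lemma rz2_eq (k₀ r₀ : ℝ) (hk : k₀ ≠ 0) (hr : r₀ ≠ 0) (z : ℝ) :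
    rz2 k₀ r₀ z = (r₀ ^ 2 : ℂ) + Complex.I * (z : ℂ) / (k₀ : ℂ) := by
  have h1 : (k₀ : ℂ) ≠ 0 := by exact_mod_cast hk
  have h2 : (r₀ : ℂ) ≠ 0 := by exact_mod_cast hr
  unfold rz2
  field_simp

lemma rz2_ne (k₀ r₀ : ℝ) (hk : k₀ ≠ 0) (hr : r₀ ≠ 0) (z : ℝ) : rz2 k₀ r₀ z ≠ 0 := by
  rw [rz2_eq k₀ r₀ hk hr]
  intro h
  have h2 := congrArg Complex.re h
  simp [Complex.div_ofReal_re, ← Complex.ofReal_pow] at h2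
  exact hr h2

lemma hw' (k₀ r₀ : ℝ) (hk : k₀ ≠ 0) (hr : r₀ ≠ 0) (z : ℝ) :
    HasDerivAt (fun s : ℝ => rz2 k₀ r₀ s) (Complex.I * 1 / (k₀ : ℂ)) z := by
  have hfun : (fun s : ℝ => rz2 k₀ r₀ s)
      = fun s : ℝ => (r₀ ^ 2 : ℂ) + Complex.I * (s : ℂ) / (k₀ : ℂ) :=
    funext fun s => rz2_eq k₀ r₀ hk hr s
  rw [hfun]
  exact (((Complex.ofRealCLM.hasDerivAt (x := z)).const_mul Complex.I).div_const
    (k₀ : ℂ)).const_add _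

lemma mu1_hasFDerivAt (k₀ r₀ C₀ : ℝ) (hk : k₀ ≠ 0) (hr : r₀ ≠ 0) (z : ℝ) (y : E2) :
    HasFDerivAt (fun y : E2 => mu1 k₀ r₀ C₀ z y)
      ((mu1 k₀ r₀ C₀ z y * (-1 / rz2 k₀ r₀ z)) • (Complex.ofRealCLM.comp (innerSL ℝ y))) y := by
  have hw : rz2 k₀ r₀ z ≠ 0 := rz2_ne k₀ r₀ hk hr z
  set w := rz2 k₀ r₀ z with hwdef
  set c : ℂ := ((r₀ ^ 2 : ℂ) / w) * ((Real.exp (-(k₀ ^ 2 * C₀ * z) / 8) : ℝ) : ℂ) with hc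
  have hfun : (fun y : E2 => mu1 k₀ r₀ C₀ z y)
      = fun x : E2 => c * Complex.exp ((-(1 / (2 * w))) * ((‖x‖ ^ 2 : ℝ) : ℂ)) := by
    funext x
    simp only [mu1, hc, ← hwdef]
    congr 1
    push_cast
    ring
  have h1 : HasFDerivAt (fun x : E2 => (‖x‖ ^ 2 : ℝ)) (2 • innerSL ℝ y) y :=
    (hasStrictFDerivAt_norm_sq y).hasFDerivAt
  have h2 := (Complex.ofRealCLM.hasFDerivAt).comp y h1
  have h3 := h2.const_mul (-(1 / (2 * w)))
  have h4 := h3.cexp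
  have h5 := h4.const_mul c
  rw [hfun]
  refine h5.congr_fderiv ?_
  ext v
  have hy : mu1 k₀ r₀ C₀ z y = c * Complex.exp ((-(1 / (2 * w))) * ((‖y‖ ^ 2 : ℝ) : ℂ)) :=
    congrFun hfun y
  simp [hy, ContinuousLinearMap.smul_apply, ContinuousLinearMap.comp_apply, smul_eq_mul,
    real_inner_comm]
  ring

lemma lap_mu1 (k₀ r₀ C₀ : ℝ) (hk : k₀ ≠ 0) (hr : r₀ ≠ 0) (z : ℝ) (x : E2) :
    lap (fun y => mu1 k₀ r₀ C₀ z y) x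
      = mu1 k₀ r₀ C₀ z x *
          ((‖x‖ ^ 2 : ℂ) / (rz2 k₀ r₀ z) ^ 2 - 2 / rz2 k₀ r₀ z) := by
  have hw : rz2 k₀ r₀ z ≠ 0 := rz2_ne k₀ r₀ hk hr z
  set w := rz2 k₀ r₀ z with hwdef
  have hd1 : ∀ (y : E2) (i : Fin 2),
      fderiv ℝ (fun y => mu1 k₀ r₀ C₀ z y) y (EuclideanSpace.single i (1:ℝ))
        = mu1 k₀ r₀ C₀ z y * ((-1 / w) * ((y i : ℝ) : ℂ)) := by
    intro y i
    rw [(mu1_hasFDerivAt k₀ r₀ C₀ hk hr z y).fderiv]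
    simp only [ContinuousLinearMap.smul_apply, ContinuousLinearMap.comp_apply,
      innerSL_apply_apply, Complex.ofRealCLM_apply, smul_eq_mul,
      EuclideanSpace.inner_single_right, RCLike.conj_to_real, one_mul]
    ring
  have hsec : ∀ i : Fin 2,
      fderiv ℝ (fun y => fderiv ℝ (fun y => mu1 k₀ r₀ C₀ z y) y
          (EuclideanSpace.single i (1:ℝ))) x (EuclideanSpace.single i (1:ℝ))
        = mu1 k₀ r₀ C₀ z x * (((x i : ℝ) : ℂ) ^ 2 / w ^ 2 - 1 / w) := by
    intro i
    have hfun2 : (fun y => fderiv ℝ (fun y => mu1 k₀ r₀ C₀ z y) y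
        (EuclideanSpace.single i (1:ℝ)))
        = fun y => mu1 k₀ r₀ C₀ z y * ((-1 / w) * ((y i : ℝ) : ℂ)) :=
      funext fun y => hd1 y i
    rw [hfun2]
    have hlin : HasFDerivAt (fun y : E2 => ((y i : ℝ) : ℂ))
        (Complex.ofRealCLM.comp (EuclideanSpace.proj i)) x :=
      (Complex.ofRealCLM.comp (EuclideanSpace.proj i)).hasFDerivAt
    have hconst := hlin.const_mul (-1 / w)
    have hmul : HasFDerivAt (fun y => mu1 k₀ r₀ C₀ z y * ((-1 / w) * ((y i : ℝ) : ℂ))) _ x :=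
      (mu1_hasFDerivAt k₀ r₀ C₀ hk hr z x).mul hconst
    rw [hmul.fderiv]
    simp only [ContinuousLinearMap.add_apply, ContinuousLinearMap.smul_apply,
      ContinuousLinearMap.comp_apply, innerSL_apply_apply, Complex.ofRealCLM_apply, smul_eq_mul,
      EuclideanSpace.inner_single_right, RCLike.conj_to_real, one_mul,
      PiLp.proj_apply, EuclideanSpace.single_apply, if_pos rfl, ← hwdef]
    push_cast
    field_simp
    ring
  have hn : (‖x‖ : ℝ) ^ 2 = x 0 ^ 2 + x 1 ^ 2 := by
    rw [EuclideanSpace.norm_eq, Real.sq_sqrt (by positivity)]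
    simp [Fin.sum_univ_two, _root_.sq_abs]
  have hnC : ((‖x‖ : ℝ) : ℂ) ^ 2 = ((x 0 : ℝ) : ℂ) ^ 2 + ((x 1 : ℝ) : ℂ) ^ 2 := by
    exact_mod_cast congrArg (Complex.ofReal) hn
  unfold lap
  rw [Fin.sum_univ_two, hsec 0, hsec 1, hnC]
  ring

lemma mu1_deriv (k₀ r₀ C₀ : ℝ) (hk : k₀ ≠ 0) (hr : r₀ ≠ 0) (z : ℝ) (x : E2) :
    deriv (fun s : ℝ => mu1 k₀ r₀ C₀ s x) z
      = mu1 k₀ r₀ C₀ z x *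
          (-(((k₀ ^ 2 * C₀ : ℝ) : ℂ)) / 8 +
            (Complex.I / (k₀ : ℂ)) *
              (-(1 / rz2 k₀ r₀ z) + (‖x‖ ^ 2 : ℂ) / (2 * (rz2 k₀ r₀ z) ^ 2))) := by
  have hw : rz2 k₀ r₀ z ≠ 0 := rz2_ne k₀ r₀ hk hr z
  have hkC : (k₀ : ℂ) ≠ 0 := by exact_mod_cast hk
  have hA := (hasDerivAt_const z ((r₀ : ℂ) ^ 2)).div (hw' k₀ r₀ hk hr z) hw
  have hBr := (((hasDerivAt_id z).const_mul (k₀ ^ 2 * C₀)).neg).div_const (8 : ℝ)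
  have hB := (hBr.exp).ofReal_comp
  have h2w : (2 : ℂ) * rz2 k₀ r₀ z ≠ 0 := mul_ne_zero two_ne_zero hw
  have hC := ((hasDerivAt_const z (-(‖x‖ ^ 2 : ℂ))).div
      ((hw' k₀ r₀ hk hr z).const_mul (2 : ℂ)) h2w).cexp
  have total := (hA.mul hB).mul hC
  have hderiv := HasDerivAt.deriv
    (show HasDerivAt (fun s : ℝ => mu1 k₀ r₀ C₀ s x) _ z from total)
  rw [hderiv]
  simp only [mu1, Pi.mul_apply, Pi.div_apply, Pi.neg_apply, id_eq, Complex.ofReal_mul, Complex.ofReal_div, Complex.ofReal_neg,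
    Complex.ofReal_one, Complex.ofReal_pow, Complex.ofReal_ofNat]
  set w := rz2 k₀ r₀ z with hwd
  set R : ℂ := ((Real.exp (-(k₀ ^ 2 * C₀ * z) / 8) : ℝ) : ℂ) with hR
  set E : ℂ := Complex.exp (-(‖x‖ ^ 2 : ℂ) / (2 * w)) with hE
  ring_nf

set_option maxHeartbeats 1000000 in
/-- **the Gaussian beam solves the damped paraxial Schrödinger equation.** -/
theorem statement16
    (k₀ r₀ C₀ : ℝ) (hk₀ : 0 < k₀) (hr₀ : 0 < r₀) (hC₀ : 0 ≤ C₀) :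
    (∀ z : ℝ, rz2 k₀ r₀ z ≠ 0) ∧
    ContDiff ℝ (⊤ : ℕ∞) (fun p : ℝ × E2 => mu1 k₀ r₀ C₀ p.1 p.2) ∧
    (∀ x : E2, mu1 k₀ r₀ C₀ 0 x = Complex.exp (-(‖x‖ ^ 2 : ℂ) / (2 * (r₀ ^ 2 : ℂ)))) ∧
    (∀ (z : ℝ) (x : E2),
      deriv (fun s => mu1 k₀ r₀ C₀ s x) z =
        (Complex.I / (2 * (k₀ : ℂ))) * lap (fun y => mu1 k₀ r₀ C₀ z y) x
          - (((k₀ ^ 2 * C₀ / 8 : ℝ) : ℝ) : ℂ) * mu1 k₀ r₀ C₀ z x) := by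
  have hk : k₀ ≠ 0 := ne_of_gt hk₀
  have hr : r₀ ≠ 0 := ne_of_gt hr₀
  have hkC : (k₀ : ℂ) ≠ 0 := by exact_mod_cast hk
  refine ⟨fun z => rz2_ne k₀ r₀ hk hr z, ?_, ?_, ?_⟩
  · have hrz : ContDiff ℝ (⊤ : ℕ∞) (fun p : ℝ × E2 => rz2 k₀ r₀ p.1) := by
      have h : (fun p : ℝ × E2 => rz2 k₀ r₀ p.1)
          = fun p : ℝ × E2 => (r₀ ^ 2 : ℂ) + Complex.I * (p.1 : ℂ) / (k₀ : ℂ) :=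
        funext fun p => rz2_eq k₀ r₀ hk hr p.1
      rw [h]
      exact contDiff_const.add ((contDiff_const.mul
        (Complex.ofRealCLM.contDiff.comp contDiff_fst)).div_const _)
    have hne : ∀ p : ℝ × E2, rz2 k₀ r₀ p.1 ≠ 0 := fun p => rz2_ne k₀ r₀ hk hr p.1
    have hne2 : ∀ p : ℝ × E2, (2 : ℂ) * rz2 k₀ r₀ p.1 ≠ 0 :=
      fun p => mul_ne_zero two_ne_zero (hne p)
    have h2r : ContDiff ℝ (⊤ : ℕ∞) (fun p : ℝ × E2 => Real.exp (-(k₀ ^ 2 * C₀ * p.1) / 8)) :=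
      (((contDiff_const.mul contDiff_fst).neg).div_const 8).exp
    have h2 : ContDiff ℝ (⊤ : ℕ∞)
        (fun p : ℝ × E2 => ((Real.exp (-(k₀ ^ 2 * C₀ * p.1) / 8) : ℝ) : ℂ)) :=
      Complex.ofRealCLM.contDiff.comp h2r
    have hnum : ContDiff ℝ (⊤ : ℕ∞) (fun p : ℝ × E2 => -(‖p.2‖ ^ 2 : ℂ)) := by
      have h : (fun p : ℝ × E2 => -(‖p.2‖ ^ 2 : ℂ))
          = fun p : ℝ × E2 => -(((‖p.2‖ ^ 2 : ℝ) : ℂ)) := by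
        funext p; push_cast; ring
      rw [h]
      exact (Complex.ofRealCLM.contDiff.comp
        ((contDiff_norm_sq ℝ).comp contDiff_snd)).neg
    simp only [mu1, div_eq_mul_inv]
    exact ((contDiff_const.mul (hrz.inv hne)).mul h2).mul
      ((hnum.mul ((contDiff_const.mul hrz).inv hne2)).cexp)
  · intro x
    have h0 : rz2 k₀ r₀ 0 = (r₀ ^ 2 : ℂ) := by
      rw [rz2_eq k₀ r₀ hk hr]; simp
    have hr2 : ((r₀ : ℂ) ^ 2) ≠ 0 := pow_ne_zero 2 (by exact_mod_cast hr)
    unfold mu1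
    rw [h0, div_self hr2]
    norm_num
  · intro z x
    have hw : rz2 k₀ r₀ z ≠ 0 := rz2_ne k₀ r₀ hk hr z
    rw [mu1_deriv k₀ r₀ C₀ hk hr z x, lap_mu1 k₀ r₀ C₀ hk hr z x]
    push_cast
    ring

end
end

section
/- Fix z > 0 and q, r ∈ ℝ². Then (r₀²/(4π)) ∫_{ℝ²} exp( −r₀²|ζ|²/4 + i ζ·r ) · exp( (k₀²/4) ∫₀^z [ C(q − ζ z'/k₀) − C(0) ] dz' ) dζ converges to exp( (k₀²/4) ( C(q) − C(0) ) z ) as r₀ → ∞; that is, in the plane-wave (infinite initial beam radius) limit the mutual coherence function equals exp( k₀² ( C(q) − C(0) ) z / 4 ). -/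
open MeasureTheory Filter Set Topology Complex
open scoped Real ENNReal NNReal InnerProductSpace

noncomputable section

/-!
Write the integrand as the Gaussian `exp (-r₀² |ζ|² / 4)` times
`h ζ = exp (i ζ·r) exp ((k₀² / 4) J ζ)`, with `J` the inner integral. The substitution
`ζ = (2 / r₀) • u` turns `(r₀² / 4π) ∫ …` into `π⁻¹ ∫ exp (-|u|²) h ((2 / r₀) • u) du`, and `h` is
continuous and bounded (`|J| ≤ 2 M |z|` when `|C| ≤ M`), so by dominated convergence the limit is
`h 0 = exp ((k₀² / 4) (C q - C 0) z)`.
-/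

section ApproximateIdentity

variable {V F : Type*} [NormedAddCommGroup V] [NormedSpace ℝ V] [MeasurableSpace V]
  [NormedAddCommGroup F] [NormedSpace ℝ F] [CompleteSpace F]

theorem tendsto_integral_smul_comp_smul_nhds_zero [OpensMeasurableSpace V]
    [SecondCountableTopology V] {μ : Measure V} {φ : V → ℝ} (hφ : Integrable φ μ) {h : V → F}
    (hh : Continuous h) (hbdd : ∃ M, ∀ x, ‖h x‖ ≤ M) :
    Tendsto (fun ε : ℝ => ∫ v, φ v • h (ε • v) ∂μ) (𝓝 0) (𝓝 ((∫ v, φ v ∂μ) • h 0)) := by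
  obtain ⟨M, hM⟩ := hbdd
  rw [← integral_smul_const]
  refine tendsto_integral_filter_of_dominated_convergence (fun v => ‖φ v‖ * M) ?_ ?_
    (hφ.norm.mul_const M) ?_
  · exact .of_forall fun ε =>
      hφ.aestronglyMeasurable.smul (hh.comp (continuous_const_smul ε)).aestronglyMeasurable
  · refine .of_forall fun ε => .of_forall fun v => ?_
    rw [norm_smul]
    exact mul_le_mul_of_nonneg_left (hM _) (norm_nonneg _)
  · refine .of_forall fun v => ?_
    have hcont : Continuous fun ε : ℝ => φ v • h (ε • v) := by fun_prop
    simpa using hcont.tendsto 0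

variable [BorelSpace V] [FiniteDimensional ℝ V] {μ : Measure V} [μ.IsAddHaarMeasure]

theorem tendsto_inv_integral_comp_smul_smul_integral_atTop {φ : V → ℝ} (hφ : Integrable φ μ)
    (hφ₀ : ∫ v, φ v ∂μ ≠ 0) {h : V → F} (hh : Continuous h) (hbdd : ∃ M, ∀ x, ‖h x‖ ≤ M) :
    Tendsto (fun R : ℝ => (∫ v, φ (R • v) ∂μ)⁻¹ • ∫ v, φ (R • v) • h v ∂μ) atTop (𝓝 (h 0)) := by
  have hlim := ((tendsto_integral_smul_comp_smul_nhds_zero hφ hh hbdd).comp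
    tendsto_inv_atTop_zero).const_smul (∫ v, φ v ∂μ)⁻¹
  rw [smul_smul, inv_mul_cancel₀ hφ₀, one_smul] at hlim
  refine hlim.congr' ?_
  filter_upwards [eventually_gt_atTop 0] with R hR
  have hscale_φ := μ.integral_comp_smul_of_nonneg φ R (hR := hR.le)
  have hscale_φh := μ.integral_comp_smul_of_nonneg (fun w => φ w • h (R⁻¹ • w)) R (hR := hR.le)
  simp only [smul_smul, inv_mul_cancel₀ hR.ne', one_smul] at hscale_φh
  rw [Function.comp_apply, hscale_φ, hscale_φh, smul_smul, smul_eq_mul, mul_inv_rev, inv_inv,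
    mul_assoc, mul_inv_cancel₀ (by positivity), mul_one]

end ApproximateIdentity

lemma integral_rexp_neg_sq_norm_smul {a : ℝ} (ha : a ≠ 0) :
    ∫ v : E2, Real.exp (-‖a • v‖ ^ 2) = π / a ^ 2 := by
  have h := GaussianFourier.integral_rexp_neg_mul_sq_norm (V := E2) (pow_pos (abs_pos.2 ha) 2)
  norm_num [finrank_euclideanSpace_fin] at h
  simpa [norm_smul, mul_pow] using h

theorem tendsto_gaussian_integral_mul_atTop {h : E2 → ℂ} (hh : Continuous h)
    (hbdd : ∃ M, ∀ x, ‖h x‖ ≤ M) :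
    Tendsto (fun r₀ : ℝ => ((r₀ ^ 2 / (4 * π) : ℝ) : ℂ) *
      ∫ ζ : E2, cexp ((-(r₀ ^ 2 * ‖ζ‖ ^ 2) / 4 : ℝ) : ℂ) * h ζ) atTop (𝓝 (h 0)) := by
  have hgauss : ∫ v : E2, Real.exp (-‖v‖ ^ 2) ≠ 0 := by
    have h1 := integral_rexp_neg_sq_norm_smul one_ne_zero
    simp only [one_smul, one_pow, div_one] at h1
    exact h1 ▸ Real.pi_ne_zero
  refine ((tendsto_inv_integral_comp_smul_smul_integral_atTop (μ := volume)
    (.of_integral_ne_zero hgauss) hgauss hh hbdd).comp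
    (tendsto_id.atTop_div_const two_pos)).congr' ?_
  filter_upwards [eventually_ne_atTop 0] with r₀ hr₀
  simp only [Function.comp_apply, id, integral_rexp_neg_sq_norm_smul (div_ne_zero hr₀ two_ne_zero)]
  rw [Complex.real_smul]
  congr 1
  · push_cast
    field_simp
    ring
  · congr 1 with ζ
    rw [Complex.real_smul, ← Complex.ofReal_exp, norm_smul, mul_pow, Real.norm_eq_abs, sq_abs]
    ring_nf

theorem statement18_general
    (k₀ : ℝ)
    (C : E2 → ℝ) (hCcont : Continuous C) (hCbdd : ∃ M : ℝ, ∀ x : E2, |C x| ≤ M)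
    (z : ℝ) (q r : E2) :
    Tendsto
      (fun r₀ : ℝ =>
        ((r₀ ^ 2 / (4 * π) : ℝ) : ℂ) *
          ∫ ζ : E2,
            Complex.exp
              (((-(r₀ ^ 2 * ‖ζ‖ ^ 2) / 4 : ℝ) : ℂ) + Complex.I * ((⟪ζ, r⟫_ℝ : ℝ) : ℂ))
            * Complex.exp
                ((((k₀ ^ 2 / 4) * ∫ z' in (0:ℝ)..z, (C (q - (z' / k₀) • ζ) - C 0) : ℝ) : ℂ)))
      atTop
      (𝓝 (Complex.exp ((((k₀ ^ 2 / 4) * (C q - C 0) * z : ℝ) : ℂ)))) := by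
  obtain ⟨M, hM⟩ := hCbdd
  set J : E2 → ℝ := fun ζ => ∫ z' in (0:ℝ)..z, (C (q - (z' / k₀) • ζ) - C 0)
  have hJ_cont : Continuous J :=
    intervalIntegral.continuous_parametric_intervalIntegral_of_continuous' (by fun_prop) 0 z
  have hJ_bdd (ζ : E2) : J ζ ≤ (M + M) * |z - 0| :=
    (le_abs_self _).trans <| Real.norm_eq_abs (J ζ) ▸
      intervalIntegral.norm_integral_le_of_norm_le_const fun _ _ =>
        (abs_sub _ _).trans (add_le_add (hM _) (hM _))
  have hlim := tendsto_gaussian_integral_mul_atTop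
    (h := fun ζ => cexp (I * (⟪ζ, r⟫_ℝ : ℝ)) * cexp ((k₀ ^ 2 / 4 * J ζ : ℝ) : ℂ)) (by fun_prop)
    ⟨Real.exp (k₀ ^ 2 / 4 * ((M + M) * |z - 0|)), fun ζ => by
      rw [norm_mul, mul_comm I, norm_exp_ofReal_mul_I, norm_exp_ofReal, one_mul]
      gcongr
      exact hJ_bdd ζ⟩
  convert hlim using 1
  · simp only [Complex.exp_add, mul_assoc, J]
  · simp only [J, inner_zero_left, ofReal_zero, mul_zero, Complex.exp_zero, one_mul, smul_zero,
      sub_zero, intervalIntegral.integral_const, smul_eq_mul]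
    ring_nf

/-- **plane-wave limit of the mutual coherence function.** As the initial beam
radius `r₀ → ∞`, the mutual coherence integral converges to
`exp( (k₀²/4)(C(q) − C(0)) z )`. -/
theorem statement18
    (k₀ : ℝ) (hk₀ : 0 < k₀)
    (C : E2 → ℝ) (hCcont : Continuous C) (hCbdd : ∃ M : ℝ, ∀ x : E2, |C x| ≤ M)
    (z : ℝ) (hz : 0 < z) (q r : E2) :
    Tendsto
      (fun r₀ : ℝ =>
        ((r₀ ^ 2 / (4 * π) : ℝ) : ℂ) *
          ∫ ζ : E2,
            Complex.exp
              (((-(r₀ ^ 2 * ‖ζ‖ ^ 2) / 4 : ℝ) : ℂ) + Complex.I * ((⟪ζ, r⟫_ℝ : ℝ) : ℂ))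
            * Complex.exp
                ((((k₀ ^ 2 / 4) * ∫ z' in (0:ℝ)..z, (C (q - (z' / k₀) • ζ) - C 0) : ℝ) : ℂ)))
      atTop
      (𝓝 (Complex.exp ((((k₀ ^ 2 / 4) * (C q - C 0) * z : ℝ) : ℂ)))) :=
  statement18_general k₀ C hCcont hCbdd z q r
end
end
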